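/- arXiv:2510.00005 — 5 statements merged into one kernel-verified Lean document; each statement's English description precedes it below -/
import Mathlib

section
/- Let $k$ be a nonarchimedean valued field with ring of integers $\mathcal{O}_k$, and let $\{V_n\}_{n\in\mathbb{N}}$ be an inverse system of $k$-vector spaces with transition maps $\pi_{m,n}\colon V_m \to V_n$ for $m \geq n$. Assume each $V_n$ is a countable union of $\mathcal{O}_k$-submodules $A_{n,N} \subset V_n$ ($N \in \mathbb{N}$). If the map $\Delta\colon \prod_n V_n \to \prod_n V_n$, $(v_n) \mapsto (v_n - \pi_{n+1,n}(v_{n+1}))$, is surjective, then there exists a sequence $(N_n)_{n\in\mathbb{N}}$ of natural numbers such that for every $n$ there exists $m \geq n$ such that for all $l \geq m$ one has $\pi_{m,n}(V_m) \subset \pi_{l,n}(V_l) + A_{n,N_n}$. -/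
section Aux

variable {k : Type*} [NormedField k]
variable {V : ℕ → Type*} [∀ n, AddCommGroup (V n)] [∀ n, Module k (V n)]
variable (π : ∀ ⦃n m : ℕ⦄, n ≤ m → (V m →ₗ[k] V n))

/-- Partial sums `∑_{j=n}^{l-1} π_{j,n}(w j)`. -/
def Ssum (n : ℕ) (w : ∀ j, V j) : ℕ → V n
  | 0 => 0
  | (l + 1) => Ssum n w l + (if h : n ≤ l then π h (w l) else 0)

lemma Ssum_succ (n : ℕ) (w : ∀ j, V j) (l : ℕ) :
    Ssum π n w (l + 1) = Ssum π n w l + (if h : n ≤ l then π h (w l) else 0) := rfl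

lemma Ssum_eq_zero (n : ℕ) (w : ∀ j, V j) : ∀ l, l ≤ n → Ssum π n w l = 0
  | 0, _ => rfl
  | (l + 1), h => by
      rw [Ssum_succ, Ssum_eq_zero n w l (by omega), dif_neg (by omega), add_zero]

lemma Ssum_congr (n : ℕ) {w w' : ∀ j, V j} :
    ∀ l, (∀ j, j < l → w j = w' j) → Ssum π n w l = Ssum π n w' l
  | 0, _ => rfl
  | (l + 1), h => by
      rw [Ssum_succ, Ssum_succ, Ssum_congr n l (fun j hj => h j (by omega)),
        h l (by omega)]

lemma Ssum_telescope
    (hπrefl : ∀ n (x : V n), π (le_refl n) x = x)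
    (hπcomp : ∀ ⦃a b c : ℕ⦄ (hab : a ≤ b) (hbc : b ≤ c) (x : V c),
      π hab (π hbc x) = π (hab.trans hbc) x)
    (n : ℕ) {w v : ∀ j, V j}
    (hv : ∀ j, w j = v j - π (Nat.le_succ j) (v (j + 1))) :
    ∀ l (hl : n ≤ l), v n - Ssum π n w l = π hl (v l) := by
  intro l hl
  induction l, hl using Nat.le_induction with
  | base => rw [Ssum_eq_zero π n w n le_rfl, sub_zero, hπrefl]
  | succ l hl ih =>
    rw [Ssum_succ, dif_pos hl, sub_add_eq_sub_sub, ih, ← map_sub, hv l,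
      sub_sub_cancel, hπcomp hl (Nat.le_succ l)]

lemma Ssum_update (n : ℕ) (w : ∀ j, V j) {m : ℕ} (u : V m) (hm : n ≤ m) :
    ∀ l, m < l →
      Ssum π n (Function.update w m (w m + u)) l = Ssum π n w l + π hm u := by
  intro l hl
  induction l with
  | zero => omega
  | succ l ih =>
    rcases Nat.lt_succ_iff_lt_or_eq.mp hl with h | h
    · rw [Ssum_succ, Ssum_succ, ih h, Function.update_of_ne (by omega) _ _]
      abel
    · subst h
      rw [Ssum_succ, Ssum_succ, dif_pos hm, dif_pos hm, Function.update_self,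
        Ssum_congr π n m (fun j hj => Function.update_of_ne (by omega) _ _),
        map_add]
      abel

/-- The "closed pieces" covering the product space: there exists `x ∈ A n N`
approximating the partial sums up to stage `L`. -/
def QQ (A : ∀ n : ℕ, ℕ → AddSubgroup (V n)) (n N L : ℕ) (w : ∀ j, V j) : Prop :=
  ∃ x, x ∈ A n N ∧ ∀ l (hl : n ≤ l), l ≤ L → ∃ u : V l, x - Ssum π n w l = π hl u

lemma QQ_congr (A : ∀ n : ℕ, ℕ → AddSubgroup (V n)) (n N L : ℕ)
    {w w' : ∀ j, V j} (h : ∀ j, j < L → w j = w' j) :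
    QQ π A n N L w → QQ π A n N L w' := by
  rintro ⟨x, hx, hq⟩
  refine ⟨x, hx, fun l hl hlL => ?_⟩
  rw [← Ssum_congr π n l (fun j hj => h j (by omega))]
  exact hq l hl hlL

end Aux

/-- the Baire-category criterion for inverse systems of `k`-vector
spaces which are countable unions of `𝒪_k`-submodules. -/
theorem exists_image_subset_of_delta_surjective
    (k : Type*) [NormedField k] [IsUltrametricDist k]
    (V : ℕ → Type*) [∀ n, AddCommGroup (V n)] [∀ n, Module k (V n)]
    (π : ∀ ⦃n m : ℕ⦄, n ≤ m → (V m →ₗ[k] V n))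
    (hπrefl : ∀ n (x : V n), π (le_refl n) x = x)
    (hπcomp : ∀ ⦃a b c : ℕ⦄ (hab : a ≤ b) (hbc : b ≤ c) (x : V c),
      π hab (π hbc x) = π (hab.trans hbc) x)
    -- the `𝒪_k`-submodules `A n N`
    (A : ∀ n : ℕ, ℕ → AddSubgroup (V n))
    (hAsmul : ∀ n N (c : k), ‖c‖ ≤ 1 → ∀ x ∈ A n N, c • x ∈ A n N)
    (hAunion : ∀ n (x : V n), ∃ N, x ∈ A n N)
    -- surjectivity of Δ
    (hΔ : ∀ w : ∀ n, V n, ∃ v : ∀ n, V n,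
      ∀ n, w n = v n - π (Nat.le_succ n) (v (n + 1))) :
    ∃ Ns : ℕ → ℕ, ∀ n, ∃ m, n ≤ m ∧ ∀ l (hml : m ≤ l),
      ∀ vm : V m, ∃ (u : V l) (a : V n), a ∈ A n (Ns n) ∧
        ∀ (hnm : n ≤ m), π hnm vm = π (hnm.trans hml) u + a := by
  classical
  have main : ∀ n, ∃ N, ∃ m, n ≤ m ∧ ∀ l (hml : m ≤ l),
      ∀ vm : V m, ∃ (u : V l) (a : V n), a ∈ A n N ∧
        ∀ (hnm : n ≤ m), π hnm vm = π (hnm.trans hml) u + a := by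
    intro n
    rcases Classical.em (∃ (N : ℕ) (w₀ : ∀ j, V j) (r : ℕ),
        ∀ w, (∀ j, j < r → w j = w₀ j) → ∀ L, QQ π A n N L w) with hcyl | hcyl
    · -- a cylinder is contained in one of the pieces: extract the conclusion
      obtain ⟨N, w₀, r, hP⟩ := hcyl
      have hmn : n ≤ max n r := le_max_left _ _
      refine ⟨N, max n r, hmn, ?_⟩
      intro l hml vm
      rcases eq_or_lt_of_le hml with h | h
      · subst h
        exact ⟨vm, 0, (A n N).zero_mem, fun hnm => by rw [add_zero]⟩
      · obtain ⟨x₀, hx₀, hq₀⟩ := hP w₀ (fun j _ => rfl) l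
        obtain ⟨u₀, e₀⟩ := hq₀ l (hmn.trans hml) le_rfl
        obtain ⟨x, hx, hq⟩ := hP (Function.update w₀ (max n r) (w₀ (max n r) + vm))
          (fun j hj => Function.update_of_ne (by omega) _ _) l
        obtain ⟨u₁, e₁⟩ := hq l (hmn.trans hml) le_rfl
        rw [Ssum_update π n w₀ vm hmn l h] at e₁
        refine ⟨u₀ - u₁, x - x₀, (A n N).sub_mem hx hx₀, ?_⟩
        intro hnm
        show π hmn vm = π (hmn.trans hml) (u₀ - u₁) + (x - x₀)
        rw [map_sub, ← e₀, ← e₁]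
        abel
    · -- no cylinder is contained in any piece: diagonalize to a contradiction
      exfalso
      have step : ∀ N (w₀ : ∀ j, V j) (r : ℕ), ∃ w, (∀ j, j < r → w j = w₀ j) ∧
          ∃ L, ¬ QQ π A n N L w := by
        intro N w₀ r
        by_contra hc
        push_neg at hc
        exact hcyl ⟨N, w₀, r, hc⟩
      choose f hf hL using step
      choose Lf hLf using hL
      let g : ℕ → ℕ × (∀ j, V j) := fun N =>
        Nat.rec (motive := fun _ => ℕ × (∀ j, V j)) (0, fun _ => 0)
          (fun N p => (max p.1 (Lf N p.2 p.1) + 1, f N p.2 p.1)) N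
      have hr1 : ∀ N, (g N).1 < (g (N + 1)).1 := fun N =>
        Nat.lt_succ_of_le (le_max_left _ _)
      have hrmono : Monotone fun N => (g N).1 :=
        monotone_nat_of_le_succ fun N => (hr1 N).le
      have hrN : ∀ N, N ≤ (g N).1 := by
        intro N
        induction N with
        | zero => exact Nat.zero_le _
        | succ N ih => exact Nat.succ_le_of_lt (lt_of_le_of_lt ih (hr1 N))
      have hstab : ∀ N M, N ≤ M → ∀ j, j < (g N).1 → (g M).2 j = (g N).2 j := by
        intro N M h
        induction M, h using Nat.le_induction with
        | base => intro j _; rfl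
        | succ M hM ih =>
          intro j hj
          exact (show (g (M + 1)).2 j = (g M).2 j from
            hf M (g M).2 (g M).1 j (lt_of_lt_of_le hj (hrmono hM))).trans (ih j hj)
      set w : ∀ j, V j := fun j => (g (j + 1)).2 j with hwdef
      have hagree : ∀ N j, j < (g N).1 → w j = (g N).2 j := by
        intro N j hj
        rcases le_total N (j + 1) with h | h
        · exact hstab N (j + 1) h j hj
        · exact (hstab (j + 1) N h j
            (lt_of_lt_of_le (Nat.lt_succ_self j) (hrN (j + 1)))).symm
      have hnotQ : ∀ N, ¬ QQ π A n N (Lf N (g N).2 (g N).1) w := by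
        intro N hQ
        apply hLf N (g N).2 (g N).1
        exact QQ_congr π A n N (Lf N (g N).2 (g N).1)
          (fun j hj => hagree (N + 1) j
            (lt_of_lt_of_le hj (Nat.le_of_lt_succ (Nat.lt_succ_of_le
              (Nat.le_succ_of_le (le_max_right _ _)))))) hQ
      obtain ⟨v, hv⟩ := hΔ w
      obtain ⟨N, hN⟩ := hAunion n (v n)
      apply hnotQ N
      exact ⟨v n, hN, fun l hl _ => ⟨v l, Ssum_telescope π hπrefl hπcomp n hv l hl⟩⟩
  choose Ns hNs using main
  exact ⟨Ns, hNs⟩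
end

section
/- Let $k$ be a complete nonarchimedean valued field with nontrivial valuation. For real numbers $\rho, \sigma > 0$ with $\sigma > \rho$, let $T_\rho$ denote the set of formal power series $\sum_{i,j} a_{ij} x^i y^j$ over $k$ (in two variables) with $|a_{ij}| \rho_1^i \rho_2^j \to 0$. Suppose $\eta_m < \rho < \min\{\eta_{m+1}, \eta\lambda^d\}$ where $\eta_m, \eta_{m+1}, \eta > 0$, $\lambda > 1$, and $d > 0$ is an integer with $\eta\lambda^d > \eta_m$. Choose $(a_i)$ in $k$ with $|a_i|\rho^i \to 0$ but $|a_i|\rho'^i \not\to 0$ for all $\rho' > \rho$. Then the series $f = \sum_i a_i x^i y^{di}$ satisfies: $f$ converges on the polydisc of radii $(\eta', \delta)$ for some $\eta' > \eta_m$, $\delta > 1$ with $\eta'\delta^d = \rho$, but $f$ does not lie in the sum of Tate algebras $k\langle \eta_{m+1}^{-1} x, y\rangle + k\langle \eta^{-1}x, \lambda^{-1} y\rangle$. -/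
open Filter Topology

/-- Membership in the two-variable Tate algebra of radii `(r, s)`:
`∑ a_{ij} xⁱ yʲ` with `‖a_{ij}‖ rⁱ sʲ → 0` as `i + j → ∞`. -/
def MemTate {k : Type*} [NormedField k] (r s : ℝ) (a : ℕ × ℕ → k) : Prop :=
  Tendsto (fun p : ℕ × ℕ => ‖a p‖ * r ^ p.1 * s ^ p.2) cofinite (𝓝 0)

/-- the counterexample series `f = ∑ aᵢ xⁱ y^{dⁱ}` converges on a
polydisc of radii `(η', δ)` with `η' > η_m`, `δ > 1`, `η'δ^d = ρ`, but does not
lie in `k⟨η_{m+1}⁻¹x, y⟩ + k⟨η⁻¹x, λ⁻¹y⟩`. -/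
theorem counterexample_series
    (k : Type*) [NontriviallyNormedField k] [CompleteSpace k] [IsUltrametricDist k]
    (ηm ηm1 η ρ lam : ℝ) (d : ℕ)
    (hηm : 0 < ηm) (hηm1 : 0 < ηm1) (hη : 0 < η) (hlam : 1 < lam) (hd : 0 < d)
    (hηlam : ηm < η * lam ^ d)
    (hρ1 : ηm < ρ) (hρ2 : ρ < min ηm1 (η * lam ^ d))
    (a : ℕ → k)
    (ha : Tendsto (fun i => ‖a i‖ * ρ ^ i) atTop (𝓝 0))
    (ha' : ∀ ρ' > ρ, ¬ Tendsto (fun i => ‖a i‖ * ρ' ^ i) atTop (𝓝 0)) :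
    (∃ η' δ : ℝ, ηm < η' ∧ 1 < δ ∧ η' * δ ^ d = ρ ∧
        MemTate η' δ (fun p => if p.2 = d * p.1 then a p.1 else 0)) ∧
      ¬ ∃ b₁ b₂ : ℕ × ℕ → k, MemTate ηm1 1 b₁ ∧ MemTate η lam b₂ ∧
        (fun p : ℕ × ℕ => if p.2 = d * p.1 then a p.1 else 0) = b₁ + b₂ := by
  have hρpos : 0 < ρ := hηm.trans hρ1
  constructor
  · -- build η', δ
    have ht1 : 1 < ρ / ηm := (one_lt_div hηm).2 hρ1
    have htpos : (0:ℝ) < ρ / ηm := lt_trans one_pos ht1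
    set δ : ℝ := (ρ / ηm) ^ ((2 * (d:ℝ))⁻¹) with hδdef
    have hδ1 : 1 < δ := by
      rw [hδdef]
      exact (Real.one_lt_rpow_iff_of_pos htpos).2 (Or.inl ⟨ht1, by positivity⟩)
    have hδpos : 0 < δ := lt_trans one_pos hδ1
    have hδd : δ ^ d = (ρ / ηm) ^ ((2:ℝ)⁻¹) := by
      rw [hδdef, ← Real.rpow_natCast ((ρ/ηm) ^ _) d, ← Real.rpow_mul htpos.le]
      congr 1
      have : (d:ℝ) ≠ 0 := Nat.cast_ne_zero.2 hd.ne'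
      field_simp
    have hδdlt : δ ^ d < ρ / ηm := by
      rw [hδd]
      calc (ρ/ηm) ^ ((2:ℝ)⁻¹) < (ρ/ηm) ^ (1:ℝ) :=
            Real.rpow_lt_rpow_of_exponent_lt ht1 (by norm_num)
        _ = ρ / ηm := Real.rpow_one _
    have hδdpos : 0 < δ ^ d := pow_pos hδpos d
    refine ⟨ρ / δ ^ d, δ, ?_, hδ1, by field_simp, ?_⟩
    · rw [lt_div_iff₀ hδdpos]
      calc ηm * δ ^ d < ηm * (ρ / ηm) := by nlinarith
        _ = ρ := by field_simp
    · -- MemTate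
      have hkey : (ρ / δ ^ d) * δ ^ d = ρ := by field_simp
      rw [MemTate, Metric.tendsto_nhds]
      intro ε hε
      rw [eventually_cofinite]
      have ha2 := (Nat.cofinite_eq_atTop ▸ ha : Tendsto (fun i => ‖a i‖ * ρ ^ i) cofinite (𝓝 0))
      have hfin : {i : ℕ | ¬ dist (‖a i‖ * ρ ^ i) 0 < ε}.Finite := by
        rw [← eventually_cofinite]
        filter_upwards [Metric.tendsto_nhds.1 ha2 ε hε] with i hi
        exact hi
      apply Set.Finite.subset ((hfin.image (fun i => (i, d * i))))
      intro p hp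
      simp only [Set.mem_setOf_eq] at hp
      by_cases h : p.2 = d * p.1
      · have hval : ‖(if p.2 = d * p.1 then a p.1 else 0 : k)‖ * (ρ / δ ^ d) ^ p.1 * δ ^ p.2
            = ‖a p.1‖ * ρ ^ p.1 := by
          rw [if_pos h, h, pow_mul, mul_assoc, ← mul_pow, hkey]
        rw [hval] at hp
        exact ⟨p.1, hp, Prod.ext rfl h.symm⟩
      · exfalso
        apply hp
        simp [h, hε]
  · rintro ⟨b₁, b₂, h₁, h₂, heq⟩
    set ρ' := min ηm1 (η * lam ^ d) with hρ'def
    have hρ'pos : 0 < ρ' := hρpos.trans hρ2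
    apply ha' ρ' hρ2
    have he : Function.Injective (fun i : ℕ => ((i, d * i) : ℕ × ℕ)) := by
      intro i j hij
      exact (Prod.mk.injEq _ _ _ _ ▸ hij).1
    have hecof : Tendsto (fun i : ℕ => ((i, d * i) : ℕ × ℕ)) cofinite cofinite :=
      he.tendsto_cofinite
    rw [← Nat.cofinite_eq_atTop]
    have hc1 : Tendsto (fun i : ℕ => ‖b₁ (i, d * i)‖ * ηm1 ^ i) cofinite (𝓝 0) := by
      have := h₁.comp hecof
      simpa [Function.comp_def] using this
    have hc2 : Tendsto (fun i : ℕ => ‖b₂ (i, d * i)‖ * (η * lam ^ d) ^ i) cofinite (𝓝 0) := by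
      have h0 := h₂.comp hecof
      have heqf : ((fun p : ℕ × ℕ => ‖b₂ p‖ * η ^ p.1 * lam ^ p.2) ∘ fun i => (i, d * i))
          = fun i : ℕ => ‖b₂ (i, d * i)‖ * (η * lam ^ d) ^ i := by
        funext i
        simp only [Function.comp_apply]
        rw [mul_pow, ← pow_mul, ← mul_assoc]
      exact heqf ▸ h0
    have hbound : ∀ i : ℕ, ‖a i‖ * ρ' ^ i ≤
        ‖b₁ (i, d * i)‖ * ηm1 ^ i + ‖b₂ (i, d * i)‖ * (η * lam ^ d) ^ i := by
      intro i
      have hai : a i = b₁ (i, d * i) + b₂ (i, d * i) := by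
        have := congrFun heq (i, d * i)
        simpa using this
      have h1 : ‖a i‖ * ρ' ^ i ≤ (‖b₁ (i, d*i)‖ + ‖b₂ (i, d*i)‖) * ρ' ^ i := by
        apply mul_le_mul_of_nonneg_right _ (pow_nonneg hρ'pos.le i)
        rw [hai]; exact norm_add_le _ _
      have h2 : ‖b₁ (i, d*i)‖ * ρ' ^ i ≤ ‖b₁ (i, d*i)‖ * ηm1 ^ i := by
        apply mul_le_mul_of_nonneg_left _ (norm_nonneg _)
        exact pow_le_pow_left₀ hρ'pos.le (min_le_left _ _) i
      have h3 : ‖b₂ (i, d*i)‖ * ρ' ^ i ≤ ‖b₂ (i, d*i)‖ * (η * lam ^ d) ^ i := by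
        apply mul_le_mul_of_nonneg_left _ (norm_nonneg _)
        exact pow_le_pow_left₀ hρ'pos.le (min_le_right _ _) i
      nlinarith [h1, h2, h3]
    have hsum : Tendsto (fun i : ℕ => ‖b₁ (i, d * i)‖ * ηm1 ^ i +
        ‖b₂ (i, d * i)‖ * (η * lam ^ d) ^ i) cofinite (𝓝 0) := by
      simpa using hc1.add hc2
    exact squeeze_zero (fun i => by positivity) hbound hsum
end

section
/- Let $k$ be a complete nonarchimedean valued field with nontrivial valuation, and let $\eta_m < \eta_{m+1} < 1$ lie in (the divisible closure of) the value group of $k$, let $\lambda > 1$ and $\eta > \eta_m$. Then the overconvergent algebra $k\langle \eta_m^{-1}x, y\rangle^\dagger := \bigcup_{\eta' > \eta_m, \delta > 1} k\langle \eta'^{-1}x, \delta^{-1}y\rangle$ is NOT contained in $k\langle \eta_{m+1}^{-1}x, y\rangle^\dagger + k\langle \eta^{-1}x, \lambda^{-1}y\rangle$. -/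
open Filter Topology

/-- Membership in the overconvergent algebra `k⟨r⁻¹x, s⁻¹y⟩† = ⋃_{r'>r, s'>s} k⟨r'⁻¹x, s'⁻¹y⟩`. -/
def MemDagger {k : Type*} [NormedField k] (r s : ℝ) (a : ℕ × ℕ → k) : Prop :=
  ∃ r' > r, ∃ s' > s, MemTate r' s' a

/-- `r` lies in the divisible closure of the value group of `k`. -/
def InDivValueGroup (k : Type*) [NormedField k] (r : ℝ) : Prop :=
  ∃ (x : k) (n : ℕ), x ≠ 0 ∧ 0 < n ∧ r ^ n = ‖x‖

/-- `k⟨η_m⁻¹x, y⟩†` is not contained in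
`k⟨η_{m+1}⁻¹x, y⟩† + k⟨η⁻¹x, λ⁻¹y⟩`. -/
theorem dagger_not_subset
    (k : Type*) [NontriviallyNormedField k] [CompleteSpace k] [IsUltrametricDist k]
    (ηm ηm1 η lam : ℝ)
    (h1 : 0 < ηm) (h2 : ηm < ηm1) (h3 : ηm1 < 1)
    (hvm : InDivValueGroup k ηm) (hvm1 : InDivValueGroup k ηm1)
    (hlam : 1 < lam) (hη : ηm < η) :
    ¬ (∀ c : ℕ × ℕ → k, MemDagger ηm 1 c →
        ∃ b₁ b₂ : ℕ × ℕ → k, MemDagger ηm1 1 b₁ ∧ MemTate η lam b₂ ∧ c = b₁ + b₂) := by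
  intro H
  obtain ⟨x0, n, hx0, hn, hxn⟩ := hvm1
  have hηm1 : 0 < ηm1 := h1.trans h2
  have hη0 : 0 < η := h1.trans hη
  have hlam0 : 0 < lam := lt_trans one_pos hlam
  obtain ⟨d, hd⟩ := pow_unbounded_of_one_lt (ηm1 / η) hlam
  have hB1 : ηm1 < η * lam ^ d := by
    rw [div_lt_iff₀ hη0] at hd; linarith [hd]
  -- the witness series
  set c : ℕ × ℕ → k :=
    fun p => if p.2 = d * p.1 ∧ n ∣ p.1 then (x0⁻¹) ^ (p.1 / n) else 0 with hcdef
  have hx0n : 0 < ‖x0‖ := norm_pos_iff.mpr hx0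
  -- norm of the witness on its support
  have hnorm : ∀ q : ℕ, ‖c (n * q, d * (n * q))‖ = (ηm1 ^ (n * q))⁻¹ := by
    intro q
    have hcond : (n * q, d * (n * q)).2 = d * (n * q, d * (n * q)).1 ∧ n ∣ (n * q, d * (n * q)).1 :=
      ⟨rfl, Dvd.intro q rfl⟩
    have hval : c (n * q, d * (n * q)) = x0⁻¹ ^ q := by
      simp [hcdef, Dvd.intro q rfl, Nat.mul_div_cancel_left q hn]
    rw [hval, norm_pow, norm_inv, ← hxn, ← inv_pow, ← pow_mul, inv_pow]
  -- value of the weighted norm on the support, for any radii u, v > 0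
  have hpow : ∀ (u v : ℝ) (q : ℕ),
      u ^ (n * q) * v ^ (d * (n * q)) = ((u * v ^ d) ^ n) ^ q := by
    intro u v q
    rw [pow_mul u n q, pow_mul v d (n * q), pow_mul (v ^ d) n q, mul_pow u (v ^ d) n,
      mul_pow (u ^ n) ((v ^ d) ^ n) q]
  have haux : ∀ (u v : ℝ) (q : ℕ),
      ‖c (n * q, d * (n * q))‖ * u ^ (n * q) * v ^ (d * (n * q))
        = (((u * v ^ d) / ηm1) ^ n) ^ q := by
    intro u v q
    rw [hnorm q, mul_assoc, hpow u v q, div_pow, div_pow, ← pow_mul ηm1 n q]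
    ring
  -- choose overconvergent radii for the witness
  set r' : ℝ := (ηm + ηm1) / 2 with hr'def
  have hr'0 : 0 < r' := by rw [hr'def]; linarith
  have hr'1 : ηm < r' := by rw [hr'def]; linarith
  have hr'2 : r' < ηm1 := by rw [hr'def]; linarith
  set t : ℝ := ηm1 / r' with htdef
  have ht1 : 1 < t := (one_lt_div hr'0).mpr hr'2
  have ht0 : (0:ℝ) < t := lt_trans one_pos ht1
  set s' : ℝ := t ^ ((d + 1 : ℝ)⁻¹) with hs'def
  have hs'1 : 1 < s' := by
    rw [hs'def]
    exact (Real.one_lt_rpow_iff_of_pos ht0).mpr (Or.inl ⟨ht1, by positivity⟩)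
  have hs'd : s' ^ d < t := by
    have hlt : ((d:ℝ) + 1)⁻¹ * d < 1 := by
      rw [inv_mul_lt_iff₀ (by positivity)]
      push_cast; linarith
    calc s' ^ d = t ^ (((d:ℝ) + 1)⁻¹ * d) := by
          rw [hs'def, ← Real.rpow_natCast (t ^ ((d + 1 : ℝ)⁻¹)) d, ← Real.rpow_mul ht0.le]
      _ < t ^ (1:ℝ) := Real.rpow_lt_rpow_of_exponent_lt ht1 hlt
      _ = t := Real.rpow_one t
  have hkey : r' * s' ^ d < ηm1 := by
    have := mul_lt_mul_of_pos_left hs'd hr'0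
    rwa [htdef, mul_div_cancel₀ _ (ne_of_gt hr'0)] at this
  have hs'0 : 0 < s' := lt_trans one_pos hs'1
  -- the witness is overconvergent
  have hc : MemDagger ηm 1 c := by
    refine ⟨r', hr'1, s', hs'1, ?_⟩
    set K : ℝ := ((r' * s' ^ d) / ηm1) ^ n with hKdef
    have hK0 : 0 ≤ K := by positivity
    have hK1 : K < 1 := by
      rw [hKdef]
      exact pow_lt_one₀ (by positivity) ((div_lt_one hηm1).mpr hkey) hn.ne'
    have hgeo : Tendsto (fun q : ℕ => K ^ q) atTop (𝓝 0) :=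
      tendsto_pow_atTop_nhds_zero_of_lt_one hK0 hK1
    refine Metric.tendsto_nhds.mpr fun ε hε => ?_
    rw [eventually_cofinite]
    have hfinq : {q : ℕ | ¬ K ^ q < ε}.Finite := by
      have := hgeo.eventually_lt_const hε
      rwa [← Nat.cofinite_eq_atTop, eventually_cofinite] at this
    refine Set.Finite.subset (hfinq.image (fun q => (n * q, d * (n * q)))) ?_
    intro p hp
    simp only [Set.mem_setOf_eq] at hp
    by_cases hsupp : p.2 = d * p.1 ∧ n ∣ p.1
    · obtain ⟨hp2, q, hq⟩ := hsupp
      have hpe : p = (n * q, d * (n * q)) := by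
        rw [Prod.ext_iff]; exact ⟨hq, by rw [hp2, hq]⟩
      refine ⟨q, ?_, hpe.symm⟩
      simp only [Set.mem_setOf_eq]
      intro hKq
      apply hp
      rw [hpe, Real.dist_eq, sub_zero, haux r' s' q, ← hKdef,
        abs_of_nonneg (pow_nonneg hK0 q)]
      exact hKq
    · exfalso
      apply hp
      have : c p = 0 := by rw [hcdef]; exact if_neg hsupp
      rw [this]
      simpa using hε
  -- apply the hypothesis and derive a contradiction
  obtain ⟨b₁, b₂, ⟨r₁, hr₁, s₁, hs₁, hb₁⟩, hb₂, hsum⟩ := H c hc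
  have hr₁0 : 0 < r₁ := lt_trans hηm1 hr₁
  have hs₁0 : 0 < s₁ := lt_trans one_pos hs₁
  set g : ℕ → ℕ × ℕ := fun q => (n * q, d * (n * q)) with hgdef
  have hginj : Function.Injective g := by
    intro a b hab
    have : n * a = n * b := congrArg Prod.fst hab
    exact Nat.eq_of_mul_eq_mul_left hn this
  set A : ℝ := (r₁ * s₁ ^ d) ^ n with hAdef
  set B : ℝ := (η * lam ^ d) ^ n with hBdef
  set M : ℝ := ηm1 ^ n with hMdef
  have hA0 : 0 < A := by positivity
  have hB0 : 0 < B := by positivity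
  have hM0 : 0 < M := by positivity
  have hMA : M < A := by
    rw [hMdef, hAdef]
    refine pow_lt_pow_left₀ ?_ hηm1.le hn.ne'
    calc ηm1 < r₁ := hr₁
      _ = r₁ * 1 := (mul_one r₁).symm
      _ ≤ r₁ * s₁ ^ d := by
          exact mul_le_mul_of_nonneg_left (one_le_pow₀ hs₁.le) hr₁0.le
  have hMB : M < B := by
    rw [hMdef, hBdef]
    exact pow_lt_pow_left₀ hB1 hηm1.le hn.ne'
  set θ : ℝ := min A B with hθdef
  have hθ0 : 0 < θ := lt_min hA0 hB0
  have hMθ : M < θ := lt_min hMA hMB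
  have hθM : 1 < θ / M := (one_lt_div hM0).mpr hMθ
  -- eventual bounds along the support
  have hcomp1 : Tendsto (fun q : ℕ => ‖b₁ (g q)‖ * r₁ ^ (n * q) * s₁ ^ (d * (n * q)))
      atTop (𝓝 0) := by
    have := hb₁.comp hginj.tendsto_cofinite
    rwa [Nat.cofinite_eq_atTop] at this
  have hcomp2 : Tendsto (fun q : ℕ => ‖b₂ (g q)‖ * η ^ (n * q) * lam ^ (d * (n * q)))
      atTop (𝓝 0) := by
    have := hb₂.comp hginj.tendsto_cofinite
    rwa [Nat.cofinite_eq_atTop] at this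
  have hE1 : ∀ᶠ q in atTop, ‖b₁ (g q)‖ * A ^ q < 1 := by
    filter_upwards [hcomp1.eventually_lt_const one_pos] with q hq
    rwa [mul_assoc, hpow r₁ s₁ q] at hq
  have hE2 : ∀ᶠ q in atTop, ‖b₂ (g q)‖ * B ^ q < 1 := by
    filter_upwards [hcomp2.eventually_lt_const one_pos] with q hq
    rwa [mul_assoc, hpow η lam q] at hq
  have hE3 : ∀ᶠ q in atTop, 2 < (θ / M) ^ q :=
    (tendsto_pow_atTop_atTop_of_one_lt hθM).eventually_gt_atTop 2
  obtain ⟨q, h1q, h2q, h3q⟩ := (hE1.and (hE2.and hE3)).exists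
  -- the contradiction at index q
  have hAq : 0 < A ^ q := pow_pos hA0 q
  have hBq : 0 < B ^ q := pow_pos hB0 q
  have hMq : 0 < M ^ q := pow_pos hM0 q
  have hθq : 0 < θ ^ q := pow_pos hθ0 q
  have hb1lt : ‖b₁ (g q)‖ < 1 / A ^ q := by rw [lt_div_iff₀ hAq]; exact h1q
  have hb2lt : ‖b₂ (g q)‖ < 1 / B ^ q := by rw [lt_div_iff₀ hBq]; exact h2q
  have hcval : ‖c (g q)‖ = 1 / M ^ q := by
    show ‖c (n * q, d * (n * q))‖ = 1 / M ^ q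
    rw [hnorm q, hMdef, ← pow_mul, one_div]
  have hcle : ‖c (g q)‖ ≤ ‖b₁ (g q)‖ + ‖b₂ (g q)‖ := by
    rw [hsum]; exact norm_add_le _ _
  have hAθ : 1 / A ^ q ≤ 1 / θ ^ q :=
    one_div_le_one_div_of_le hθq (pow_le_pow_left₀ hθ0.le (min_le_left A B) q)
  have hBθ : 1 / B ^ q ≤ 1 / θ ^ q :=
    one_div_le_one_div_of_le hθq (pow_le_pow_left₀ hθ0.le (min_le_right A B) q)
  have hfinal : 1 / M ^ q < 2 / θ ^ q := by
    calc 1 / M ^ q = ‖c (g q)‖ := hcval.symm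
      _ ≤ ‖b₁ (g q)‖ + ‖b₂ (g q)‖ := hcle
      _ < 1 / A ^ q + 1 / B ^ q := add_lt_add hb1lt hb2lt
      _ ≤ 1 / θ ^ q + 1 / θ ^ q := add_le_add hAθ hBθ
      _ = 2 / θ ^ q := by ring
  have : θ ^ q < 2 * M ^ q := by
    rw [div_lt_div_iff₀ hMq hθq] at hfinal
    linarith
  have hcontra : (θ / M) ^ q < 2 := by
    rw [div_pow, div_lt_iff₀ hMq]
    linarith
  linarith
end

section
/- Let $\{V_n\}_{n\in\mathbb{N}}$ be an inverse system of $k$-vector spaces such that each $V_n = \bigcup_{N\in\mathbb{N}} V_{n,N}$ is an increasing countable union of vector subspaces $V_{n,N}$. If the map $\Delta\colon \prod_n V_n \to \prod_n V_n$, $(v_n)\mapsto(v_n - \pi_{n+1,n}(v_{n+1}))$, is surjective, then for every $n$ there exist $N \in \mathbb{N}$ and $m \geq n$ such that for all $l \geq m$: $\pi_{m,n}(V_m) \subset \pi_{l,n}(V_l) + V_{n,N}$. -/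
section Aux

variable {k : Type*} [NormedField k]
variable {V : ℕ → Type*} [∀ n, AddCommGroup (V n)] [∀ n, Module k (V n)]
variable (π : ∀ ⦃n m : ℕ⦄, n ≤ m → (V m →ₗ[k] V n))
variable (n : ℕ)

/-- Partial sum `∑_{j=n}^{m-1} π_{j,n}(g j)`. -/
noncomputable def auxS (g : ∀ j, V j) (m : ℕ) : V n :=
  ∑ j ∈ Finset.Ico n m, if hj : n ≤ j then π hj (g j) else 0

lemma auxS_self (g : ∀ j, V j) : auxS π n g n = 0 := by
  simp [auxS]

lemma auxS_succ (g : ∀ j, V j) (m : ℕ) (hm : n ≤ m) :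
    auxS π n g (m + 1) = auxS π n g m + π hm (g m) := by
  rw [auxS, Finset.sum_Ico_succ_top hm]
  simp [auxS, hm]

lemma auxS_congr (g g' : ∀ j, V j) (m : ℕ) (h : ∀ j, j < m → g j = g' j) :
    auxS π n g m = auxS π n g' m := by
  refine Finset.sum_congr rfl fun j hj => ?_
  rw [Finset.mem_Ico] at hj
  rw [h j hj.2]

lemma auxS_split (g : ∀ j, V j) (m l : ℕ) (hm : n ≤ m) (hml : m < l)
    (hg : ∀ j, m < j → g j = 0) :
    auxS π n g l = auxS π n g m + π hm (g m) := by
  rw [auxS, ← Finset.sum_Ico_consecutive _ hm hml.le]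
  congr 1
  rw [Finset.sum_eq_single_of_mem m (Finset.mem_Ico.2 ⟨le_refl m, hml⟩)]
  · simp [hm]
  · intro j hj hne
    rw [Finset.mem_Ico] at hj
    rw [hg j (lt_of_le_of_ne hj.1 (Ne.symm hne))]
    simp

lemma aux_telescope
    (hπcomp : ∀ ⦃a b c : ℕ⦄ (hab : a ≤ b) (hbc : b ≤ c) (x : V c),
      π hab (π hbc x) = π (hab.trans hbc) x)
    (hπrefl : ∀ n (x : V n), π (le_refl n) x = x)
    (v w : ∀ j, V j)
    (hw : ∀ j, w j = v j - π (Nat.le_succ j) (v (j + 1))) :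
    ∀ m (hm : n ≤ m), v n = π hm (v m) + auxS π n w m := by
  refine Nat.le_induction ?_ ?_
  · rw [auxS_self, hπrefl]
    simp
  · intro m hm ih
    rw [auxS_succ π n w m hm]
    have hvm : v m = w m + π (Nat.le_succ m) (v (m + 1)) := by
      rw [hw m]; abel
    have : π hm (v m) = π hm (w m) + π (hm.trans (Nat.le_succ m)) (v (m + 1)) := by
      rw [hvm, map_add, hπcomp]
    rw [ih, this]
    have : (π (hm.trans (Nat.le_succ m)) : V (m+1) →ₗ[k] V n)
        = π (show n ≤ m + 1 from hm.trans (Nat.le_succ m)) := rfl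
    abel

/-- The recursive construction of states `(m_N, g_N)`. -/
noncomputable def auxSt (L : ∀ (N m : ℕ), n ≤ m → (∀ j, V j) → ℕ)
    (vM : ∀ (N m : ℕ), n ≤ m → (∀ j, V j) → V m)
    (hL : ∀ N m hm g, m < L N m hm g) : ℕ → {m : ℕ // n ≤ m} × (∀ j, V j)
  | 0 => (⟨n, le_refl n⟩, fun _ => 0)
  | (N + 1) =>
      let p := auxSt L vM hL N
      (⟨L N p.1.1 p.1.2 p.2, p.1.2.trans (hL N p.1.1 p.1.2 p.2).le⟩,
        Function.update p.2 p.1.1 (vM N p.1.1 p.1.2 p.2))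

variable (L : ∀ (N m : ℕ), n ≤ m → (∀ j, V j) → ℕ)
    (vM : ∀ (N m : ℕ), n ≤ m → (∀ j, V j) → V m)
    (hL : ∀ N m hm g, m < L N m hm g)

lemma auxSt_succ (N : ℕ) :
    auxSt n L vM hL (N + 1) =
      (⟨L N (auxSt n L vM hL N).1.1 (auxSt n L vM hL N).1.2 (auxSt n L vM hL N).2,
        (auxSt n L vM hL N).1.2.trans (hL N _ _ _).le⟩,
        Function.update (auxSt n L vM hL N).2 (auxSt n L vM hL N).1.1
          (vM N (auxSt n L vM hL N).1.1 (auxSt n L vM hL N).1.2 (auxSt n L vM hL N).2)) := by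
  rw [auxSt]

lemma auxSt_m_lt (N : ℕ) :
    (auxSt n L vM hL N).1.1 < (auxSt n L vM hL (N + 1)).1.1 := by
  rw [auxSt_succ]
  exact hL N _ _ _

lemma auxSt_m_strictMono : StrictMono fun N => (auxSt n L vM hL N).1.1 :=
  strictMono_nat_of_lt_succ (auxSt_m_lt n L vM hL)

lemma auxSt_zero_of_ge : ∀ N j, (auxSt n L vM hL N).1.1 ≤ j → (auxSt n L vM hL N).2 j = 0 := by
  intro N
  induction N with
  | zero => intro j _; rfl
  | succ N ih =>
    intro j hj
    rw [auxSt_succ] at hj ⊢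
    dsimp only at hj ⊢
    have hlt : (auxSt n L vM hL N).1.1 < j := lt_of_lt_of_le (hL N _ _ _) hj
    rw [Function.update_of_ne hlt.ne']
    exact ih j hlt.le

lemma auxSt_stab : ∀ N N', N ≤ N' → ∀ j, j < (auxSt n L vM hL N).1.1 →
    (auxSt n L vM hL N').2 j = (auxSt n L vM hL N).2 j := by
  intro N N' hNN'
  induction N' , hNN' using Nat.le_induction with
  | base => intro j _; rfl
  | succ N' hNN' ih =>
    intro j hj
    have hmm : (auxSt n L vM hL N).1.1 ≤ (auxSt n L vM hL N').1.1 :=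
      (auxSt_m_strictMono n L vM hL).monotone hNN'
    rw [auxSt_succ]
    dsimp only
    rw [Function.update_of_ne (by omega)]
    exact ih j hj

lemma auxSt_m_ge (N : ℕ) : n + N ≤ (auxSt n L vM hL N).1.1 := by
  induction N with
  | zero => exact le_refl n
  | succ N ih => have := auxSt_m_lt n L vM hL N; omega

end Aux

/-- variant of the criterion for systems of `k`-vector spaces which
are increasing countable unions of vector subspaces. -/
theorem exists_image_subset_of_delta_surjective_subspaces
    (k : Type*) [NormedField k] [IsUltrametricDist k]
    (V : ℕ → Type*) [∀ n, AddCommGroup (V n)] [∀ n, Module k (V n)]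
    (π : ∀ ⦃n m : ℕ⦄, n ≤ m → (V m →ₗ[k] V n))
    (hπrefl : ∀ n (x : V n), π (le_refl n) x = x)
    (hπcomp : ∀ ⦃a b c : ℕ⦄ (hab : a ≤ b) (hbc : b ≤ c) (x : V c),
      π hab (π hbc x) = π (hab.trans hbc) x)
    -- the increasing countable unions of vector subspaces
    (W : ∀ n : ℕ, ℕ → Submodule k (V n))
    (hWmono : ∀ n, Monotone (W n))
    (hWunion : ∀ n (x : V n), ∃ N, x ∈ W n N)
    -- surjectivity of Δ
    (hΔ : ∀ w : ∀ n, V n, ∃ v : ∀ n, V n,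
      ∀ n, w n = v n - π (Nat.le_succ n) (v (n + 1))) :
    ∀ n, ∃ (N : ℕ) (m : ℕ), n ≤ m ∧ ∀ l (hml : m ≤ l),
      ∀ vm : V m, ∃ (u : V l) (a : V n), a ∈ W n N ∧
        ∀ (hnm : n ≤ m), π hnm vm = π (hnm.trans hml) u + a := by
  intro n
  by_contra hcon
  push_neg at hcon
  -- Step 1: cleaned-up negation with strict inequality
  have hkey : ∀ (N m : ℕ), n ≤ m → ∃ l, m < l ∧ ∃ vm : V m,
      ∀ (u : V l) (a : V n), a ∈ W n N → ∀ (hnm : n ≤ m) (hnl : n ≤ l),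
        π hnm vm ≠ π hnl u + a := by
    intro N m hm
    obtain ⟨l, hml, vm, hv⟩ := hcon N m hm
    rcases hml.lt_or_eq with hlt | heq
    · refine ⟨l, hlt, vm, fun u a ha hnm hnl => ?_⟩
      obtain ⟨hnm', hne⟩ := hv u a ha
      exact hne
    · exfalso
      subst heq
      obtain ⟨hnm', hne⟩ := hv vm 0 (Submodule.zero_mem _)
      exact hne (add_zero _).symm
  clear hcon
  -- Step 2: choice functions
  choose NW hNW using hWunion
  choose L0 hL0 vM0 hvM0 using hkey
  set L : ∀ (N m : ℕ), n ≤ m → (∀ j, V j) → ℕ :=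
    fun N m hm g => L0 (max N (NW n (auxS π n g m))) m hm with hLdef
  set vMf : ∀ (N m : ℕ), n ≤ m → (∀ j, V j) → V m :=
    fun N m hm g => vM0 (max N (NW n (auxS π n g m))) m hm with hvMfdef
  have hL : ∀ N m hm g, m < L N m hm g := fun N m hm g => hL0 _ m hm
  -- Step 3: the diagonal sequence w
  set w : ∀ j, V j := fun j => (auxSt n L vMf hL (j + 1)).2 j with hwdef
  have hwE : ∀ N j, j < (auxSt n L vMf hL N).1.1 → w j = (auxSt n L vMf hL N).2 j := by
    intro N j hj
    have hj1 : j < (auxSt n L vMf hL (j + 1)).1.1 := by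
      have := auxSt_m_ge n L vMf hL (j + 1); omega
    rcases le_total N (j + 1) with h | h
    · rw [hwdef]
      exact (auxSt_stab n L vMf hL N (j + 1) h j hj).symm ▸
        (auxSt_stab n L vMf hL N (j + 1) h j hj)
    · rw [hwdef]
      exact (auxSt_stab n L vMf hL (j + 1) N h j hj1).symm
  -- Step 4: solve Δ v = w and derive the contradiction at stage N = NW n (v n)
  obtain ⟨v, hvw⟩ := hΔ w
  have htel := aux_telescope π n hπcomp hπrefl v w hvw
  set N := NW n (v n) with hNdef
  set m := (auxSt n L vMf hL N).1.1 with hmdef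
  have hm : n ≤ m := (auxSt n L vMf hL N).1.2
  set g := (auxSt n L vMf hL N).2 with hgdef
  set s0 := auxS π n g m with hs0def
  set N' := max N (NW n s0) with hN'def
  set l := L0 N' m hm with hldef
  have hstep := auxSt_succ n L vMf hL N
  have hml : (auxSt n L vMf hL (N + 1)).1.1 = l := by rw [hstep]
  have hg' : (auxSt n L vMf hL (N + 1)).2 = Function.update g m (vM0 N' m hm) := by
    rw [hstep]
  have hmltl : m < l := hL0 N' m hm
  have hnl : n ≤ l := hm.trans hmltl.le
  have e1 : auxS π n w l = auxS π n (auxSt n L vMf hL (N + 1)).2 l :=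
    auxS_congr π n _ _ l fun j hj => hwE (N + 1) j (by omega)
  have e2 : auxS π n (auxSt n L vMf hL (N + 1)).2 l
      = auxS π n (auxSt n L vMf hL (N + 1)).2 m
        + π hm ((auxSt n L vMf hL (N + 1)).2 m) := by
    refine auxS_split π n _ m l hm hmltl fun j hj => ?_
    rw [hg', Function.update_of_ne (by omega)]
    exact auxSt_zero_of_ge n L vMf hL N j (by omega)
  have e3 : (auxSt n L vMf hL (N + 1)).2 m = vM0 N' m hm := by
    rw [hg']; exact Function.update_self _ _ _
  have e4 : auxS π n (auxSt n L vMf hL (N + 1)).2 m = s0 := by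
    refine auxS_congr π n _ _ m fun j hj => ?_
    rw [hg', Function.update_of_ne (by omega)]
  have hwl : auxS π n w l = s0 + π hm (vM0 N' m hm) := by
    rw [e1, e2, e3, e4]
  have h1 := htel l hnl
  have hmem : v n - s0 ∈ W n N' :=
    sub_mem (hWmono n (le_max_left _ _) (hNW n (v n)))
      (hWmono n (le_max_right _ _) (hNW n s0))
  refine hvM0 N' m hm (-(v l)) (v n - s0) hmem hm hnl ?_
  rw [map_neg, h1, hwl]
  abel
end

section
/- Let $k$ be a complete nonarchimedean valued field with nontrivial valuation, and let $(\eta_n)_{n\in\mathbb{N}}$ be a strictly increasing sequence of positive reals tending to $1$, each lying in the divisible closure of the value group of $k$. Define $V_n = \bigcup_{\eta > \eta_n, \lambda > 1} k\langle \eta^{-1}x, \lambda^{-1}y\rangle$ (intersection-restriction maps $V_m \hookrightarrow V_n$ for $m \geq n$ given by inclusion of power series). Then the map $\Delta\colon \prod_n V_n \to \prod_n V_n$, $(f_n) \mapsto (f_n - f_{n+1})$, is NOT surjective; equivalently, $\varprojlim^{(1)}_n V_n \neq 0$. -/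
open Filter Topology

/-- There is `l > 1` with `l ^ (n+1) < a`, given `1 < a`. -/
lemma aux_exists_lt_pow {a : ℝ} (ha : 1 < a) (n : ℕ) :
    ∃ l : ℝ, 1 < l ∧ l ^ (n + 1) < a := by
  have hla : 0 < Real.log a := Real.log_pos ha
  have ha' : (0:ℝ) < a := by linarith
  refine ⟨Real.exp (Real.log a / (n + 2)), ?_, ?_⟩
  · rw [show (1 : ℝ) = Real.exp 0 from (Real.exp_zero).symm]
    exact Real.exp_lt_exp.mpr (by positivity)
  · rw [← Real.exp_nat_mul]
    conv_rhs => rw [← Real.exp_log ha']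
    apply Real.exp_lt_exp.mpr
    push_cast
    rw [show ((n:ℝ) + 1) * (Real.log a / ((n:ℝ) + 2))
        = Real.log a * (((n:ℝ) + 1) / ((n:ℝ) + 2)) by ring]
    have h2 : ((n:ℝ) + 1) / ((n:ℝ) + 2) < 1 := by
      rw [div_lt_one (by positivity)]; linarith
    nlinarith

/-- A sufficient criterion for membership in a Tate algebra: the function is supported
on a graph `j ↦ (A j, j)` and dominated there by `C * q ^ (j / (d+1))` with `q < 1`. -/
lemma memTate_aux {k : Type*} [NormedField k] {r s : ℝ} (a : ℕ × ℕ → k)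
    (A : ℕ → ℕ) (d : ℕ) (C q : ℝ) (hC0 : 0 ≤ C) (hq0 : 0 ≤ q) (hq1 : q < 1)
    (hr : 0 < r) (hs : 0 < s)
    (hsupp : ∀ p : ℕ × ℕ, a p ≠ 0 → p = (A p.2, p.2))
    (hbd : ∀ j : ℕ, ‖a (A j, j)‖ * r ^ A j * s ^ j ≤ C * q ^ (j / (d + 1))) :
    MemTate r s a := by
  rw [MemTate, Metric.tendsto_nhds]
  intro ε hε
  rw [eventually_cofinite]
  obtain ⟨K, hKlt⟩ : ∃ K : ℕ, C * q ^ K < ε := by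
    rcases eq_or_lt_of_le hC0 with hC | hC
    · exact ⟨0, by rw [← hC]; simpa using hε⟩
    · obtain ⟨K, hK⟩ := exists_pow_lt_of_lt_one (div_pos hε hC) hq1
      exact ⟨K, by rwa [← lt_div_iff₀' hC]⟩
  apply Set.Finite.subset (Set.Finite.image (fun j => (A j, j)) (Set.finite_Iio ((d + 1) * K)))
  intro p hp
  simp only [Set.mem_setOf_eq] at hp
  have hval0 : (0:ℝ) ≤ ‖a p‖ * r ^ p.1 * s ^ p.2 := by positivity
  rw [dist_zero_right, Real.norm_eq_abs, abs_of_nonneg hval0] at hp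
  have hne : a p ≠ 0 := by
    intro h0
    exact hp (by simpa [h0] using hε)
  have hpe := hsupp p hne
  refine ⟨p.2, ?_, hpe.symm⟩
  simp only [Set.mem_Iio]
  by_contra hge
  push_neg at hge
  have hDK : K ≤ p.2 / (d + 1) :=
    (Nat.le_div_iff_mul_le (Nat.succ_pos d)).mpr (by rw [Nat.mul_comm]; exact hge)
  have h1 : q ^ (p.2 / (d + 1)) ≤ q ^ K := pow_le_pow_of_le_one hq0 hq1.le hDK
  have h2 : ‖a p‖ * r ^ p.1 * s ^ p.2 ≤ C * q ^ (p.2 / (d + 1)) := by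
    rw [hpe]; exact hbd p.2
  have : ‖a p‖ * r ^ p.1 * s ^ p.2 < ε :=
    lt_of_le_of_lt (h2.trans (by nlinarith)) hKlt
  exact hp this

/-- The `x`-exponent of the `j`-th support point in row `n` : `⌈j/(n+1)⌉`. -/
def auxA (n j : ℕ) : ℕ := (j + n) / (n + 1)

/-- The intermediate radius `(ηₙ + ηₙ₊₁)/2`. -/
noncomputable def auxβ (ηs : ℕ → ℝ) (n : ℕ) : ℝ := (ηs n + ηs (n + 1)) / 2

/-- The exponent used for the coefficient at the `j`-th support point of row `n`. -/
noncomputable def auxe (ηs : ℕ → ℝ) (NN : ℕ → ℕ) (n j : ℕ) : ℕ :=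
  ⌈Real.log (auxβ ηs n) / Real.log (ηs n) * (auxA n j) / (NN n)⌉₊

/-- The coefficient at the `j`-th support point of row `n`. -/
noncomputable def auxc {k : Type*} [NormedField k]
    (ηs : ℕ → ℝ) (xx : ℕ → k) (NN : ℕ → ℕ) (n j : ℕ) : k :=
  (xx n)⁻¹ ^ auxe ηs NN n j

open Classical in
/-- The cocycle witnessing non-surjectivity. -/
noncomputable def auxw {k : Type*} [NormedField k]
    (ηs : ℕ → ℝ) (xx : ℕ → k) (NN : ℕ → ℕ) (n : ℕ) (p : ℕ × ℕ) : k :=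
  if 2 ^ n ∣ p.2 ∧ Odd (p.2 / 2 ^ n) ∧ p.1 = auxA n p.2 then auxc ηs xx NN n p.2 else 0

/-- Basic facts about the midpoint radius. -/
lemma auxβ_facts {ηs : ℕ → ℝ} (n : ℕ) (h0 : 0 < ηs n) (h1 : ηs n < ηs (n + 1))
    (h2 : ηs (n + 1) < 1) :
    ηs n < auxβ ηs n ∧ auxβ ηs n < ηs (n + 1) ∧ 0 < auxβ ηs n ∧ auxβ ηs n < 1 := by
  unfold auxβ
  refine ⟨by linarith, by linarith, by linarith, by linarith⟩

/-- The two-sided bound on the norm of the coefficients. -/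
lemma auxc_bounds {k : Type*} [NormedField k]
    (ηs : ℕ → ℝ) (xx : ℕ → k) (NN : ℕ → ℕ) (n j : ℕ)
    (hη0 : 0 < ηs n) (hη1 : ηs n < 1) (hstep : ηs n < ηs (n + 1)) (hη1' : ηs (n + 1) < 1)
    (hN0 : 0 < NN n) (hxN : ηs n ^ NN n = ‖xx n‖) :
    1 ≤ ‖auxc ηs xx NN n j‖ * auxβ ηs n ^ auxA n j ∧
      ‖auxc ηs xx NN n j‖ * auxβ ηs n ^ auxA n j ≤ (ηs n ^ NN n)⁻¹ := by
  obtain ⟨hβ1, hβ2, hβ3, hβ4⟩ := auxβ_facts n hη0 hstep hη1'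
  have hlogη : Real.log (ηs n) < 0 := Real.log_neg hη0 hη1
  have hlogβ : Real.log (auxβ ηs n) < 0 := Real.log_neg hβ3 hβ4
  set τ : ℝ := Real.log (auxβ ηs n) / Real.log (ηs n) with hτdef
  set A : ℕ := auxA n j with hAdef
  set E : ℕ := auxe ηs NN n j with hEdef
  have hτpos : 0 < τ := div_pos_iff.mpr (Or.inr ⟨hlogβ, hlogη⟩)
  have harg : (0:ℝ) ≤ τ * A / (NN n) := by positivity
  have hNpos : (0:ℝ) < (NN n : ℝ) := by exact_mod_cast hN0
  have hEceil : E = ⌈τ * A / (NN n)⌉₊ := by rw [hEdef, hτdef, hAdef]; rfl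
  have hle : τ * A ≤ (NN n : ℝ) * E := by
    have h := Nat.le_ceil (τ * A / (NN n))
    rw [← hEceil, div_le_iff₀ hNpos] at h
    linarith [h, mul_comm ((NN n : ℕ) : ℝ) ((E : ℕ) : ℝ)]
  have hge : (NN n : ℝ) * E ≤ τ * A + NN n := by
    have h := Nat.ceil_lt_add_one harg
    rw [← hEceil] at h
    have h2 : (E : ℝ) * NN n < (τ * A / (NN n) + 1) * NN n :=
      mul_lt_mul_of_pos_right h hNpos
    rw [add_mul, div_mul_cancel₀ _ hNpos.ne', one_mul] at h2
    linarith [mul_comm ((NN n : ℕ) : ℝ) ((E : ℕ) : ℝ)]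
  have hnorm : ‖auxc ηs xx NN n j‖ = (ηs n ^ (NN n * E))⁻¹ := by
    rw [show auxc ηs xx NN n j = (xx n)⁻¹ ^ E from rfl]
    rw [norm_pow, norm_inv, ← hxN, inv_pow, ← pow_mul]
  have hexp : ∀ a : ℕ, (ηs n) ^ a = Real.exp (a * Real.log (ηs n)) := by
    intro a
    rw [← Real.log_pow, Real.exp_log (pow_pos hη0 a)]
  have hβA : auxβ ηs n ^ A = Real.exp (((A : ℝ) * τ) * Real.log (ηs n)) := by
    have hh : (A : ℝ) * Real.log (auxβ ηs n) = ((A : ℝ) * τ) * Real.log (ηs n) := by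
      rw [hτdef, mul_assoc, div_mul_cancel₀ _ hlogη.ne]
    rw [← Real.exp_log (pow_pos hβ3 A), Real.log_pow, hh]
  have hEpos : (0:ℝ) < ηs n ^ (NN n * E) := pow_pos hη0 _
  have hNpow : (0:ℝ) < ηs n ^ NN n := pow_pos hη0 _
  constructor
  · have h1 : ηs n ^ (NN n * E) ≤ auxβ ηs n ^ A := by
      rw [hexp (NN n * E), hβA]
      apply Real.exp_le_exp.mpr
      push_cast
      calc ((NN n : ℝ) * (E : ℝ)) * Real.log (ηs n)
          ≤ (τ * A) * Real.log (ηs n) := mul_le_mul_of_nonpos_right hle hlogη.le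
        _ = ((A : ℝ) * τ) * Real.log (ηs n) := by ring
    rw [hnorm, inv_mul_eq_div, le_div_iff₀ hEpos, one_mul]
    exact h1
  · have h2 : auxβ ηs n ^ A * ηs n ^ NN n ≤ ηs n ^ (NN n * E) := by
      rw [hexp (NN n * E), hβA, hexp (NN n), ← Real.exp_add]
      apply Real.exp_le_exp.mpr
      rw [show ((A : ℝ) * τ) * Real.log (ηs n) + (NN n : ℝ) * Real.log (ηs n)
          = (τ * (A : ℝ) + NN n) * Real.log (ηs n) by ring]
      push_cast
      exact mul_le_mul_of_nonpos_right hge hlogη.le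
    rw [hnorm, inv_mul_eq_div, div_le_iff₀ hEpos, inv_mul_eq_div, le_div_iff₀ hNpow]
    exact h2

/-- Each `auxw n` belongs to `Vₙ`. -/
lemma auxw_memTate {k : Type*} [NormedField k]
    (ηs : ℕ → ℝ) (xx : ℕ → k) (NN : ℕ → ℕ) (n : ℕ)
    (hη0 : 0 < ηs n) (hη1 : ηs n < 1) (hstep : ηs n < ηs (n + 1)) (hη1' : ηs (n + 1) < 1)
    (hN0 : 0 < NN n) (hxN : ηs n ^ NN n = ‖xx n‖) :
    ∃ η > ηs n, ∃ lam > 1, MemTate η lam (auxw ηs xx NN n) := by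
  classical
  obtain ⟨hβ1, hβ2, hβ3, hβ4⟩ := auxβ_facts n hη0 hstep hη1'
  set β : ℝ := auxβ ηs n with hβdef
  set μf : ℝ := (ηs n + β) / 2 with hμfdef
  have hμf1 : ηs n < μf := by rw [hμfdef]; linarith
  have hμf2 : μf < β := by rw [hμfdef]; linarith
  have hμfpos : 0 < μf := lt_trans hη0 hμf1
  clear_value β μf
  obtain ⟨lf, hlf1, hlfpow⟩ := aux_exists_lt_pow
    (show 1 < β / μf by rw [lt_div_iff₀ hμfpos]; linarith) n
  have hlfpos : 0 < lf := lt_trans one_pos hlf1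
  refine ⟨μf, hμf1, lf, hlf1, ?_⟩
  have hq1 : μf / β * lf ^ (n + 1) < 1 := by
    have h := mul_lt_mul_of_pos_left hlfpow (div_pos hμfpos hβ3)
    have heq : μf / β * (β / μf) = 1 := by field_simp
    linarith [heq ▸ h]
  apply memTate_aux (auxw ηs xx NN n) (auxA n) n ((ηs n ^ NN n)⁻¹ * lf ^ n)
    (μf / β * lf ^ (n + 1)) (by positivity) (by positivity) hq1 hμfpos hlfpos
  · intro p hne
    unfold auxw at hne
    by_cases hcond : 2 ^ n ∣ p.2 ∧ Odd (p.2 / 2 ^ n) ∧ p.1 = auxA n p.2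
    · exact Prod.ext hcond.2.2 rfl
    · rw [if_neg hcond] at hne
      exact absurd rfl hne
  · intro j
    have hDA : j / (n + 1) ≤ auxA n j := by
      unfold auxA
      exact Nat.div_le_div_right (by omega)
    have hjD : j ≤ n + (n + 1) * (j / (n + 1)) := by
      have h1 := Nat.div_add_mod j (n + 1)
      have h2 : j % (n + 1) < n + 1 := Nat.mod_lt j (by omega)
      omega
    have hwle : ‖auxw ηs xx NN n (auxA n j, j)‖ ≤ (ηs n ^ NN n)⁻¹ * (β ^ auxA n j)⁻¹ := by
      unfold auxw
      by_cases hcond : 2 ^ n ∣ j ∧ Odd (j / 2 ^ n) ∧ auxA n j = auxA n j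
      · rw [if_pos (by exact hcond)]
        have h := (auxc_bounds ηs xx NN n j hη0 hη1 hstep hη1' hN0 hxN).2
        rw [← hβdef] at h
        have hβApos : (0:ℝ) < β ^ auxA n j := pow_pos hβ3 _
        rw [← le_div_iff₀ hβApos] at h
        rw [div_eq_mul_inv] at h
        exact h
      · rw [if_neg (by simpa using hcond)]
        simp only [norm_zero]
        positivity
    calc ‖auxw ηs xx NN n (auxA n j, j)‖ * μf ^ auxA n j * lf ^ j
        ≤ ((ηs n ^ NN n)⁻¹ * (β ^ auxA n j)⁻¹) * μf ^ auxA n j * lf ^ j := by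
          apply mul_le_mul_of_nonneg_right _ (by positivity)
          exact mul_le_mul_of_nonneg_right hwle (by positivity)
      _ = (ηs n ^ NN n)⁻¹ * (μf / β) ^ auxA n j * lf ^ j := by
          rw [div_pow, div_eq_mul_inv]
          ring
      _ ≤ (ηs n ^ NN n)⁻¹ * (μf / β) ^ (j / (n + 1)) * lf ^ (n + (n + 1) * (j / (n + 1))) := by
          have hrat : (0:ℝ) ≤ μf / β := by positivity
          have hrat1 : μf / β ≤ 1 := by rw [div_le_one hβ3]; linarith
          apply mul_le_mul
          · exact mul_le_mul_of_nonneg_left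
              (pow_le_pow_of_le_one hrat hrat1 hDA) (by positivity)
          · exact pow_le_pow_right₀ hlf1.le hjD
          · positivity
          · positivity
      _ = (ηs n ^ NN n)⁻¹ * lf ^ n * (μf / β * lf ^ (n + 1)) ^ (j / (n + 1)) := by
          rw [pow_add, pow_mul, mul_pow]
          ring

/-- The `t`-th column used by row `m`. -/
def auxCol (m t : ℕ) : ℕ := 2 ^ m * (2 * t + 1)

/-- The `t`-th support point of row `m`. -/
def auxPos (m t : ℕ) : ℕ × ℕ := (auxA m (auxCol m t), auxCol m t)

lemma auxPos_injective (m : ℕ) : Function.Injective (auxPos m) := by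
  intro a b h
  have h2 : auxCol m a = auxCol m b := congrArg Prod.snd h
  unfold auxCol at h2
  have := Nat.eq_of_mul_eq_mul_left (Nat.two_pow_pos m) h2
  omega

lemma auxw_auxPos {k : Type*} [NormedField k]
    (ηs : ℕ → ℝ) (xx : ℕ → k) (NN : ℕ → ℕ) (m t : ℕ) :
    auxw ηs xx NN m (auxPos m t) = auxc ηs xx NN m (auxCol m t) := by
  classical
  have h1 : auxCol m t / 2 ^ m = 2 * t + 1 :=
    Nat.mul_div_cancel_left _ (Nat.two_pow_pos m)
  have hc : 2 ^ m ∣ (auxPos m t).2 ∧ Odd ((auxPos m t).2 / 2 ^ m) ∧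
      (auxPos m t).1 = auxA m (auxPos m t).2 := by
    refine ⟨⟨2 * t + 1, rfl⟩, ?_, rfl⟩
    show Odd (auxCol m t / 2 ^ m)
    rw [h1]
    exact ⟨t, by ring⟩
  show (if 2 ^ m ∣ (auxPos m t).2 ∧ Odd ((auxPos m t).2 / 2 ^ m) ∧
      (auxPos m t).1 = auxA m (auxPos m t).2
      then auxc ηs xx NN m (auxPos m t).2 else 0) = auxc ηs xx NN m (auxCol m t)
  rw [if_pos hc]
  rfl

lemma auxw_auxPos_zero {k : Type*} [NormedField k]
    (ηs : ℕ → ℝ) (xx : ℕ → k) (NN : ℕ → ℕ) {l m : ℕ} (hlm : l < m) (t : ℕ) :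
    auxw ηs xx NN l (auxPos m t) = 0 := by
  classical
  show (if 2 ^ l ∣ (auxPos m t).2 ∧ Odd ((auxPos m t).2 / 2 ^ l) ∧
      (auxPos m t).1 = auxA l (auxPos m t).2
      then auxc ηs xx NN l (auxPos m t).2 else 0) = 0
  rw [if_neg]
  rintro ⟨hdvd, hodd, -⟩
  have h2 : (auxPos m t).2 = 2 ^ l * (2 ^ (m - l) * (2 * t + 1)) := by
    show auxCol m t = _
    unfold auxCol
    rw [← mul_assoc, ← pow_add]
    congr 2
    omega
  rw [h2, Nat.mul_div_cancel_left _ (Nat.two_pow_pos l)] at hodd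
  have hev : 2 ∣ 2 ^ (m - l) * (2 * t + 1) :=
    Dvd.dvd.mul_right (dvd_pow_self 2 (by omega)) _
  rw [Nat.odd_iff] at hodd
  omega

/-- for `Vₙ = ⋃_{η > ηₙ, λ > 1} k⟨η⁻¹x, λ⁻¹y⟩`, the map `Δ` is not
surjective, i.e. `lim¹ Vₙ ≠ 0`; this says `H¹(𝔹⁻ × 𝔹⁺, 𝒪) ≠ 0`. -/
theorem delta_not_surjective_mixed_disc
    (k : Type*) [NontriviallyNormedField k] [CompleteSpace k] [IsUltrametricDist k]
    (ηs : ℕ → ℝ) (hpos : ∀ n, 0 < ηs n) (hmono : StrictMono ηs)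
    (hlt : ∀ n, ηs n < 1) (hlim : Tendsto ηs atTop (𝓝 1))
    (hval : ∀ n, InDivValueGroup k (ηs n)) :
    ¬ (∀ w : ℕ → (ℕ × ℕ → k), (∀ n, ∃ η > ηs n, ∃ lam > 1, MemTate η lam (w n)) →
        ∃ v : ℕ → (ℕ × ℕ → k), (∀ n, ∃ η > ηs n, ∃ lam > 1, MemTate η lam (v n)) ∧
          ∀ n, w n = v n - v (n + 1)) := by
  classical
  intro H
  obtain ⟨xx, NN, hprop⟩ : ∃ (xx : ℕ → k) (NN : ℕ → ℕ),
      ∀ n, xx n ≠ 0 ∧ 0 < NN n ∧ ηs n ^ NN n = ‖xx n‖ := by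
    choose xx NN h1 h2 h3 using hval
    exact ⟨xx, NN, fun n => ⟨h1 n, h2 n, h3 n⟩⟩
  obtain ⟨v, hv, hvw⟩ := H (auxw ηs xx NN) (fun n => auxw_memTate ηs xx NN n (hpos n) (hlt n)
    (hmono (Nat.lt_succ_self n)) (hlt (n + 1)) (hprop n).2.1 (hprop n).2.2)
  choose μ hμ lam hlam hmem using hv
  have hvrec : ∀ n p, v (n + 1) p = v n p - auxw ηs xx NN n p := by
    intro n p
    have h := congrFun (hvw n) p
    simp only [Pi.sub_apply] at h
    rw [h]; ring
  -- square root of lam 0 and choice of the bad row m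
  have hlam0 : 1 < lam 0 := hlam 0
  have hμ0pos : 0 < μ 0 := lt_trans (hpos 0) (hμ 0)
  set L : ℝ := Real.sqrt (lam 0) with hLdef
  have hLnn : 0 ≤ L := Real.sqrt_nonneg _
  have hLL : L * L = lam 0 := Real.mul_self_sqrt (by linarith)
  have hL1 : 1 < L := by nlinarith
  obtain ⟨M, hM⟩ := pow_unbounded_of_one_lt (μ 0)⁻¹ hL1
  set m : ℕ := M with hmdef
  have hLm : (μ 0)⁻¹ < L ^ (m + 1) :=
    lt_of_lt_of_le hM (pow_le_pow_right₀ hL1.le (Nat.le_succ M))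
  obtain ⟨hβ1, hβ2, hβ3, hβ4⟩ :=
    auxβ_facts m (hpos m) (hmono (Nat.lt_succ_self m)) (hlt (m + 1))
  have hμ1pos : 0 < μ (m + 1) := lt_trans (hpos (m + 1)) (hμ (m + 1))
  have hlam1pos : 0 < lam (m + 1) := lt_trans one_pos (hlam (m + 1))
  have hlam0pos : 0 < lam 0 := lt_trans one_pos hlam0
  set B : ℝ := auxβ ηs m with hBdef
  have hkey1 : ∀ j, 1 ≤ ‖auxc ηs xx NN m j‖ * B ^ auxA m j := by
    intro j
    have h := (auxc_bounds ηs xx NN m j (hpos m) (hlt m) (hmono (Nat.lt_succ_self m))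
      (hlt (m + 1)) (hprop m).2.1 (hprop m).2.2).1
    rwa [← hBdef] at h
  -- tendsto along the support of row m
  have hTend : Tendsto (auxPos m) atTop cofinite := by
    rw [← Nat.cofinite_eq_atTop]
    exact (auxPos_injective m).tendsto_cofinite
  have hmem1 : Tendsto (fun t => ‖v (m + 1) (auxPos m t)‖ *
      μ (m + 1) ^ auxA m (auxCol m t) * lam (m + 1) ^ auxCol m t) atTop (𝓝 0) := by
    have h := (hmem (m + 1)).comp hTend
    simpa [Function.comp_def, auxPos] using h
  have hmem0 : Tendsto (fun t => ‖v 0 (auxPos m t)‖ *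
      μ 0 ^ auxA m (auxCol m t) * lam 0 ^ auxCol m t) atTop (𝓝 0) := by
    have h := (hmem 0).comp hTend
    simpa [Function.comp_def, auxPos] using h
  -- v 0 agrees with v m on the support of row m
  have hv0m : ∀ t, v 0 (auxPos m t) = v m (auxPos m t) := by
    intro t
    have hgen : ∀ l, l ≤ m → v 0 (auxPos m t) = v l (auxPos m t) := by
      intro l
      induction l with
      | zero => intro _; rfl
      | succ l ih =>
        intro hl
        rw [hvrec l (auxPos m t), auxw_auxPos_zero ηs xx NN (by omega) t, sub_zero]
        exact ih (by omega)
    exact hgen m le_rfl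
  -- the (m+1)-st tail is eventually small on the support
  have hsm1 : B < μ (m + 1) := lt_trans hβ2 (hμ (m + 1))
  have ev1 : ∀ᶠ t in atTop, ‖v (m + 1) (auxPos m t)‖ *
      μ (m + 1) ^ auxA m (auxCol m t) * lam (m + 1) ^ auxCol m t < 1 :=
    hmem1.eventually (gt_mem_nhds one_pos)
  have ev_r : ∀ᶠ t in atTop,
      ‖v (m + 1) (auxPos m t)‖ * B ^ auxA m (auxCol m t) < 1 := by
    filter_upwards [ev1] with t ht
    by_contra hcon
    push_neg at hcon
    have hchain : (1:ℝ) ≤ ‖v (m + 1) (auxPos m t)‖ *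
        μ (m + 1) ^ auxA m (auxCol m t) * lam (m + 1) ^ auxCol m t := by
      calc (1:ℝ) ≤ ‖v (m + 1) (auxPos m t)‖ * B ^ auxA m (auxCol m t) := hcon
        _ ≤ ‖v (m + 1) (auxPos m t)‖ * μ (m + 1) ^ auxA m (auxCol m t) :=
            mul_le_mul_of_nonneg_left (pow_le_pow_left₀ hβ3.le hsm1.le _) (norm_nonneg _)
        _ = ‖v (m + 1) (auxPos m t)‖ * μ (m + 1) ^ auxA m (auxCol m t) * 1 :=
            (mul_one _).symm
        _ ≤ ‖v (m + 1) (auxPos m t)‖ *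
            μ (m + 1) ^ auxA m (auxCol m t) * lam (m + 1) ^ auxCol m t :=
            mul_le_mul_of_nonneg_left (one_le_pow₀ (hlam (m + 1)).le) (by positivity)
    linarith
  -- hence v 0 is eventually big on the support
  have ev_u : ∀ᶠ t in atTop, 1 ≤ ‖v 0 (auxPos m t)‖ * B ^ auxA m (auxCol m t) := by
    filter_upwards [ev_r] with t ht
    have hsum : v m (auxPos m t) = auxc ηs xx NN m (auxCol m t) + v (m + 1) (auxPos m t) := by
      rw [hvrec m (auxPos m t), auxw_auxPos]
      ring
    have hmax : ‖auxc ηs xx NN m (auxCol m t)‖ ≤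
        max ‖v m (auxPos m t)‖ ‖v (m + 1) (auxPos m t)‖ := by
      have he : auxc ηs xx NN m (auxCol m t)
          = v m (auxPos m t) + -(v (m + 1) (auxPos m t)) := by
        rw [hsum]; ring
      rw [he]
      calc ‖v m (auxPos m t) + -(v (m + 1) (auxPos m t))‖
          ≤ max ‖v m (auxPos m t)‖ ‖-(v (m + 1) (auxPos m t))‖ :=
            IsUltrametricDist.norm_add_le_max _ _
        _ = max ‖v m (auxPos m t)‖ ‖v (m + 1) (auxPos m t)‖ := by rw [norm_neg]
    have hβApos : (0:ℝ) < B ^ auxA m (auxCol m t) := pow_pos hβ3 _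
    have hk := hkey1 (auxCol m t)
    rw [hv0m t]
    rcases max_cases ‖v m (auxPos m t)‖ ‖v (m + 1) (auxPos m t)‖ with ⟨hm1, hm2⟩ | ⟨hm1, hm2⟩
    · calc (1:ℝ) ≤ ‖auxc ηs xx NN m (auxCol m t)‖ * B ^ auxA m (auxCol m t) := hk
        _ ≤ ‖v m (auxPos m t)‖ * B ^ auxA m (auxCol m t) := by
            apply mul_le_mul_of_nonneg_right _ hβApos.le
            rw [← hm1]; exact hmax
    · exfalso
      have hbad : (1:ℝ) ≤ ‖v (m + 1) (auxPos m t)‖ * B ^ auxA m (auxCol m t) := by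
        calc (1:ℝ) ≤ ‖auxc ηs xx NN m (auxCol m t)‖ * B ^ auxA m (auxCol m t) := hk
          _ ≤ ‖v (m + 1) (auxPos m t)‖ * B ^ auxA m (auxCol m t) := by
              apply mul_le_mul_of_nonneg_right _ hβApos.le
              rw [← hm1]; exact hmax
      linarith
  -- case analysis on the size of μ 0
  rcases le_or_gt B (μ 0) with hcase | hcase
  · have evlow : ∀ᶠ t in atTop, (1:ℝ) ≤ ‖v 0 (auxPos m t)‖ *
        μ 0 ^ auxA m (auxCol m t) * lam 0 ^ auxCol m t := by
      filter_upwards [ev_u] with t ht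
      calc (1:ℝ) ≤ ‖v 0 (auxPos m t)‖ * B ^ auxA m (auxCol m t) := ht
        _ ≤ ‖v 0 (auxPos m t)‖ * μ 0 ^ auxA m (auxCol m t) :=
            mul_le_mul_of_nonneg_left (pow_le_pow_left₀ hβ3.le hcase _) (norm_nonneg _)
        _ = ‖v 0 (auxPos m t)‖ * μ 0 ^ auxA m (auxCol m t) * 1 := (mul_one _).symm
        _ ≤ ‖v 0 (auxPos m t)‖ * μ 0 ^ auxA m (auxCol m t) * lam 0 ^ auxCol m t :=
            mul_le_mul_of_nonneg_left (one_le_pow₀ hlam0.le) (by positivity)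
    have ev0 : ∀ᶠ t in atTop, ‖v 0 (auxPos m t)‖ *
        μ 0 ^ auxA m (auxCol m t) * lam 0 ^ auxCol m t < 1 :=
      hmem0.eventually (gt_mem_nhds one_pos)
    obtain ⟨t, h1, h2⟩ := (evlow.and ev0).exists
    linarith
  · have hρpos : 0 < μ 0 / B := div_pos hμ0pos hβ3
    have hρ1 : μ 0 / B < 1 := by rw [div_lt_one hβ3]; exact hcase
    have evlow : ∀ᶠ t in atTop, μ 0 / B ≤ ‖v 0 (auxPos m t)‖ *
        μ 0 ^ auxA m (auxCol m t) * lam 0 ^ auxCol m t := by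
      filter_upwards [ev_u] with t ht
      have hβApos : (0:ℝ) < B ^ auxA m (auxCol m t) := pow_pos hβ3 _
      have hnormge : (B ^ auxA m (auxCol m t))⁻¹ ≤ ‖v 0 (auxPos m t)‖ := by
        rw [inv_eq_one_div, div_le_iff₀ hβApos]
        linarith
      -- arithmetic of exponents
      have hADle : auxA m (auxCol m t) ≤ auxCol m t / (m + 1) + 1 := by
        have h1 : (auxCol m t + m) / (m + 1) ≤ (auxCol m t + (m + 1)) / (m + 1) :=
          Nat.div_le_div_right (by omega)
        have h2 : (auxCol m t + (m + 1)) / (m + 1) = auxCol m t / (m + 1) + 1 :=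
          Nat.add_div_right _ (by omega)
        have h3 : auxA m (auxCol m t) = (auxCol m t + m) / (m + 1) := rfl
        omega
      have hDmul : (m + 1) * (auxCol m t / (m + 1)) ≤ auxCol m t := by
        have h5 := Nat.div_add_mod (auxCol m t) (m + 1)
        omega
      have hinvD : ((μ 0 / B)⁻¹) ^ (auxCol m t / (m + 1)) ≤ L ^ auxCol m t := by
        have e1 : (μ 0 / B)⁻¹ = B / μ 0 := inv_div _ _
        have e2 : B / μ 0 ≤ (μ 0)⁻¹ := by
          rw [div_le_iff₀ hμ0pos, inv_mul_cancel₀ hμ0pos.ne']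
          exact hβ4.le
        calc ((μ 0 / B)⁻¹) ^ (auxCol m t / (m + 1))
            ≤ ((μ 0)⁻¹) ^ (auxCol m t / (m + 1)) :=
              pow_le_pow_left₀ (by positivity) (e1 ▸ e2) _
          _ ≤ (L ^ (m + 1)) ^ (auxCol m t / (m + 1)) :=
              pow_le_pow_left₀ (by positivity) hLm.le _
          _ = L ^ ((m + 1) * (auxCol m t / (m + 1))) := (pow_mul L _ _).symm
          _ ≤ L ^ auxCol m t := pow_le_pow_right₀ hL1.le hDmul
      have hρD : (1:ℝ) ≤ (μ 0 / B) ^ (auxCol m t / (m + 1)) * L ^ auxCol m t := by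
        have hone : (μ 0 / B) ^ (auxCol m t / (m + 1)) *
            ((μ 0 / B)⁻¹) ^ (auxCol m t / (m + 1)) = 1 := by
          rw [← mul_pow, mul_inv_cancel₀ hρpos.ne', one_pow]
        calc (1:ℝ) = (μ 0 / B) ^ (auxCol m t / (m + 1)) *
              ((μ 0 / B)⁻¹) ^ (auxCol m t / (m + 1)) := hone.symm
          _ ≤ (μ 0 / B) ^ (auxCol m t / (m + 1)) * L ^ auxCol m t :=
              mul_le_mul_of_nonneg_left hinvD (by positivity)
      have hLj : (1:ℝ) ≤ L ^ auxCol m t := one_le_pow₀ hL1.le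
      have hcore : μ 0 / B ≤ (μ 0 / B) ^ auxA m (auxCol m t) * lam 0 ^ auxCol m t := by
        have hρA : (μ 0 / B) ^ (auxCol m t / (m + 1) + 1) ≤ (μ 0 / B) ^ auxA m (auxCol m t) :=
          pow_le_pow_of_le_one hρpos.le hρ1.le hADle
        calc μ 0 / B = μ 0 / B * 1 * 1 := by ring
          _ ≤ μ 0 / B * ((μ 0 / B) ^ (auxCol m t / (m + 1)) * L ^ auxCol m t)
              * L ^ auxCol m t := by
              apply mul_le_mul _ hLj (by norm_num) (by positivity)
              exact mul_le_mul_of_nonneg_left hρD hρpos.le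
          _ = (μ 0 / B) ^ (auxCol m t / (m + 1) + 1) * lam 0 ^ auxCol m t := by
              rw [pow_succ, ← hLL, mul_pow]
              ring
          _ ≤ (μ 0 / B) ^ auxA m (auxCol m t) * lam 0 ^ auxCol m t :=
              mul_le_mul_of_nonneg_right hρA (by positivity)
      calc μ 0 / B ≤ (μ 0 / B) ^ auxA m (auxCol m t) * lam 0 ^ auxCol m t := hcore
        _ = (B ^ auxA m (auxCol m t))⁻¹ * μ 0 ^ auxA m (auxCol m t)
            * lam 0 ^ auxCol m t := by
            rw [div_pow, div_eq_mul_inv]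
            ring
        _ ≤ ‖v 0 (auxPos m t)‖ * μ 0 ^ auxA m (auxCol m t) * lam 0 ^ auxCol m t := by
            apply mul_le_mul_of_nonneg_right _ (by positivity)
            exact mul_le_mul_of_nonneg_right hnormge (by positivity)
    have ev0 : ∀ᶠ t in atTop, ‖v 0 (auxPos m t)‖ *
        μ 0 ^ auxA m (auxCol m t) * lam 0 ^ auxCol m t < μ 0 / B :=
      hmem0.eventually (gt_mem_nhds hρpos)
    obtain ⟨t, h1, h2⟩ := (evlow.and ev0).exists
    linarith
end
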